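/- Let μ be an antidominant composition with exactly s ≥ 1 nonzero parts, let λ = (max(μ_1−1,0),…,max(μ_n−1,0)), and let s' = |{i : μ_i ≥ 2}| be the number of nonzero parts of λ. Let a = (a_{n−s+1},…,a_n) be pairwise distinct elements of {1,…,n} and set δ_i = 1 if i ∈ {a_{n−s+1},…,a_n} and δ_i = 0 otherwise. For a subset B ⊆ {1,…,n} with |B| = s', define the tuple a(B) = (b_{n−s'+1},…,b_n) successively for j = n, n−1, …, n−s'+1 by: b_j = min{x ∈ B∖{b_{j+1},…,b_n} : x ≥ a_j} if this set is nonempty, and b_j = min(B∖{b_{j+1},…,b_n}) otherwise. Then for every k ∈ ℤ_{≥0}^n one has c_a^μ(k_1+δ_1,…,k_n+δ_n) = Σ_{B ⊆ {1,…,n}, |B| = s'} q^{Σ_{j : b_j < a_j} λ_j} · c_{a(B)}^λ(k_1,…,k_n) in ℤ[q]. -/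

import Mathlib

open Finset

namespace CO

/-- The column diagram `dg'(λ)` of a composition, as a finset of boxes `(i, j)`,
`1 ≤ i ≤ n`, `1 ≤ j ≤ λ_i`. -/
def dgF (n : ℕ) (lam : ℕ → ℕ) : Finset (ℕ × ℕ) :=
  (Finset.Icc 1 n).biUnion fun i => (Finset.Icc 1 (lam i)).image fun j => (i, j)

/-- The augmented diagram `d̂g(λ)`: one extra box `(i, 0)` below each column. -/
def augF (n : ℕ) (lam : ℕ → ℕ) : Finset (ℕ × ℕ) :=
  dgF n lam ∪ (Finset.Icc 1 n).image fun i => (i, 0)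

/-- The box `d(u)` directly below a box. -/
def dbox (u : ℕ × ℕ) : ℕ × ℕ := (u.1, u.2 - 1)

/-- The augmented filling `σ̂`: equal to `σ` on positive rows and to `i` on `(i, 0)`. -/
def aug (σ : ℕ × ℕ → ℕ) (u : ℕ × ℕ) : ℕ := if u.2 = 0 then u.1 else σ u

/-- A filling takes values in `{1, …, n}` on the diagram. -/
def IsFilling (n : ℕ) (lam : ℕ → ℕ) (σ : ℕ × ℕ → ℕ) : Prop :=
  ∀ u ∈ dgF n lam, 1 ≤ σ u ∧ σ u ≤ n

/-- Attacking boxes: same row, or consecutive rows with the lower box to the right. -/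
def Attack (u v : ℕ × ℕ) : Prop :=
  u ≠ v ∧ (u.2 = v.2 ∨ (u.2 = v.2 + 1 ∧ u.1 < v.1) ∨ (v.2 = u.2 + 1 ∧ v.1 < u.1))

/-- A non-attacking filling: `σ̂` takes distinct values on attacking pairs of the
augmented diagram. -/
def NonAttacking (n : ℕ) (lam : ℕ → ℕ) (σ : ℕ × ℕ → ℕ) : Prop :=
  ∀ u ∈ augF n lam, ∀ v ∈ augF n lam, Attack u v → aug σ u ≠ aug σ v

/-- The arm of a box `u`. -/
def armF (n : ℕ) (lam : ℕ → ℕ) (u : ℕ × ℕ) : Finset (ℕ × ℕ) :=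
  ((dgF n lam).filter fun v => v.1 < u.1 ∧ v.2 = u.2 ∧ lam v.1 ≤ lam u.1) ∪
    ((augF n lam).filter fun v => u.1 < v.1 ∧ v.2 + 1 = u.2 ∧ lam v.1 < lam u.1)

/-- `a(u) = |arm(u)|`. -/
def armCard (n : ℕ) (lam : ℕ → ℕ) (u : ℕ × ℕ) : ℕ := (armF n lam u).card

/-- The number of inversions of `σ̂`: attacking pairs `u, u'` with `σ̂(u) < σ̂(u')`
and (same row with `u` to the left, or `u'` one row above `u` strictly to the left). -/
def invCard (n : ℕ) (lam : ℕ → ℕ) (σ : ℕ × ℕ → ℕ) : ℕ :=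
  ((augF n lam ×ˢ augF n lam).filter fun p =>
    aug σ p.1 < aug σ p.2 ∧
      ((p.1.2 = p.2.2 ∧ p.1.1 < p.2.1) ∨ (p.2.2 = p.1.2 + 1 ∧ p.2.1 < p.1.1))).card

/-- The descent set of `σ̂`. -/
def desF (n : ℕ) (lam : ℕ → ℕ) (σ : ℕ × ℕ → ℕ) : Finset (ℕ × ℕ) :=
  (dgF n lam).filter fun u => aug σ (dbox u) < aug σ u

/-- The statistic `coinv(σ̂)` (as an integer). -/
def coinv (n : ℕ) (lam : ℕ → ℕ) (σ : ℕ × ℕ → ℕ) : ℤ :=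
  (∑ u ∈ dgF n lam, (armCard n lam u : ℤ)) - invCard n lam σ +
    (((Finset.Icc 1 n ×ˢ Finset.Icc 1 n).filter fun p =>
      p.1 < p.2 ∧ lam p.1 ≤ lam p.2).card : ℤ) +
    ∑ u ∈ desF n lam σ, (armCard n lam u : ℤ)

/-- The statistic `T(σ)`. -/
def Tstat (n : ℕ) (lam : ℕ → ℕ) (σ : ℕ × ℕ → ℕ) : ℤ :=
  coinv n lam σ -
    ∑ u ∈ (dgF n lam).filter fun u => aug σ u ≠ aug σ (dbox u), (armCard n lam u : ℤ)

/-- Antidominant composition: `λ_1 ≤ ⋯ ≤ λ_n`. -/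
def Antidominant (n : ℕ) (lam : ℕ → ℕ) : Prop :=
  ∀ i j, 1 ≤ i → i ≤ j → j ≤ n → lam i ≤ lam j

/-- Appropriate filling: non-attacking with `T(σ) = 0`. -/
def Appropriate (n : ℕ) (lam : ℕ → ℕ) (σ : ℕ × ℕ → ℕ) : Prop :=
  IsFilling n lam σ ∧ NonAttacking n lam σ ∧ Tstat n lam σ = 0

/-- The operation `π` on compositions: `π(λ) = (λ_n + 1, λ_1, …, λ_{n-1})`. -/
def piComp (n : ℕ) (lam : ℕ → ℕ) : ℕ → ℕ :=
  fun i => if i = 1 then lam n + 1 else lam (i - 1)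

/-- The operation `π` on boxes. -/
def piBox (n : ℕ) (u : ℕ × ℕ) : ℕ × ℕ :=
  if u.1 < n then (u.1 + 1, u.2) else (1, u.2 + 1)

/-- Extension by zero of a function defined on the diagram. -/
def ext (n : ℕ) (lam : ℕ → ℕ) (f : {u // u ∈ dgF n lam} → ℕ) : ℕ × ℕ → ℕ :=
  fun u => if h : u ∈ dgF n lam then f ⟨u, h⟩ else 0

/-- `qstat(σ) = Σ (l(u) + 1)` over boxes `u` with `σ̂(u) < σ̂(d(u))`. -/
def qstat (n : ℕ) (lam : ℕ → ℕ) (σ : ℕ × ℕ → ℕ) : ℕ :=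
  ∑ u ∈ (dgF n lam).filter fun u => aug σ u < aug σ (dbox u), (lam u.1 - u.2 + 1)

end CO

namespace CO

/-- The statistic `asc(τ) = Σ (l(u) + 1)` over boxes `u = (i, j)` with `j ≥ 2` and
`τ(u) < τ(d(u))`. -/
def ascStat (n : ℕ) (mu : ℕ → ℕ) (τ : ℕ × ℕ → ℕ) : ℕ :=
  ∑ u ∈ (dgF n mu).filter fun u => 2 ≤ u.2 ∧ τ u < τ (dbox u), (mu u.1 - u.2 + 1)

/-- The greedy rule (iii): for boxes in rows `≥ 2`, with `S = τ(arm(u)) ∪ {τ(u)}`,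
`τ(u)` is the minimum of `{x ∈ S : x ≥ τ(d(u))}` if nonempty, and `min S` otherwise. -/
def GreedyRule (n : ℕ) (mu : ℕ → ℕ) (τ : ℕ × ℕ → ℕ) : Prop :=
  ∀ u ∈ dgF n mu, 2 ≤ u.2 →
    (({x ∈ τ '' ↑(armF n mu u) ∪ {τ u} | τ (dbox u) ≤ x}.Nonempty →
        τ u = sInf {x ∈ τ '' ↑(armF n mu u) ∪ {τ u} | τ (dbox u) ≤ x}) ∧
      (¬ {x ∈ τ '' ↑(armF n mu u) ∪ {τ u} | τ (dbox u) ≤ x}.Nonempty →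
        τ u = sInf (τ '' ↑(armF n mu u) ∪ {τ u})))

/-- Conditions (i)–(iv) on the fillings `τ` counted by `c_a^μ(k)`. -/
def CCond (n : ℕ) (mu : ℕ → ℕ) (a : ℕ → ℕ) (k : ℕ → ℕ) (τ : ℕ × ℕ → ℕ) : Prop :=
  (∀ u ∈ dgF n mu, 1 ≤ τ u ∧ τ u ≤ n) ∧
    (∀ j, (j, 1) ∈ dgF n mu → τ (j, 1) = a j) ∧
    (∀ u ∈ dgF n mu, ∀ v ∈ dgF n mu, Attack u v → τ u ≠ τ v) ∧
    GreedyRule n mu τ ∧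
    ∀ i, 1 ≤ i → i ≤ n → ((dgF n mu).filter fun u => τ u = i).card = k i

open Classical in
/-- The coefficient `c_a^μ(k) ∈ ℤ[q]`: the generating function `Σ_τ q^{asc(τ)}`
over fillings satisfying (i)–(iv). -/
noncomputable def cCoef (n : ℕ) (mu : ℕ → ℕ) (a : ℕ → ℕ) (k : ℕ → ℕ) : Polynomial ℤ :=
  ∑ f ∈ (Fintype.piFinset fun _ : {u // u ∈ dgF n mu} => Finset.Icc 1 n).filter
      fun f => CCond n mu a k (ext n mu f),
    Polynomial.X ^ ascStat n mu (ext n mu f)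

end CO

namespace CO

/-- One greedy selection step: the minimum of `{x ∈ B : x ≥ a_j}` if nonempty, and
the minimum of `B` otherwise. -/
def chooseStep (a : ℕ → ℕ) (j : ℕ) (B : Finset ℕ) : ℕ :=
  if h : (B.filter fun x => a j ≤ x).Nonempty then (B.filter fun x => a j ≤ x).min' h
  else if h' : B.Nonempty then B.min' h' else 0

/-- The set of candidates remaining after the `d` greedy steps performed at
columns `n, n - 1, …, n - d + 1`. -/
def remaining (a : ℕ → ℕ) (n : ℕ) (B : Finset ℕ) : ℕ → Finset ℕ
  | 0 => B
  | d + 1 => (remaining a n B d).erase (chooseStep a (n - d) (remaining a n B d))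

/-- The entry `b_j` of the tuple `a(B)`, defined successively for `j = n, n-1, …`. -/
def bval (a : ℕ → ℕ) (n : ℕ) (B : Finset ℕ) (j : ℕ) : ℕ :=
  chooseStep a j (remaining a n B (n - j))

end CO

namespace CO

/-! ### Basic membership lemmas -/

lemma mem_dgF {n : ℕ} {mu : ℕ → ℕ} {u : ℕ × ℕ} :
    u ∈ dgF n mu ↔ 1 ≤ u.1 ∧ u.1 ≤ n ∧ 1 ≤ u.2 ∧ u.2 ≤ mu u.1 := by
  unfold dgF
  simp only [Finset.mem_biUnion, Finset.mem_image, Finset.mem_Icc]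
  constructor
  · rintro ⟨i, ⟨hi1, hi2⟩, j, ⟨hj1, hj2⟩, rfl⟩
    exact ⟨hi1, hi2, hj1, hj2⟩
  · rintro ⟨h1, h2, h3, h4⟩
    exact ⟨u.1, ⟨h1, h2⟩, u.2, ⟨h3, h4⟩, rfl⟩

lemma mem_augF {n : ℕ} {mu : ℕ → ℕ} {u : ℕ × ℕ} :
    u ∈ augF n mu ↔ 1 ≤ u.1 ∧ u.1 ≤ n ∧ u.2 ≤ mu u.1 := by
  unfold augF
  simp only [Finset.mem_union, mem_dgF, Finset.mem_image, Finset.mem_Icc]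
  constructor
  · rintro (⟨h1, h2, _, h4⟩ | ⟨i, ⟨hi1, hi2⟩, rfl⟩)
    · exact ⟨h1, h2, h4⟩
    · exact ⟨hi1, hi2, Nat.zero_le _⟩
  · rintro ⟨h1, h2, h3⟩
    rcases Nat.eq_zero_or_pos u.2 with h | h
    · exact Or.inr ⟨u.1, ⟨h1, h2⟩, by rw [← h]⟩
    · exact Or.inl ⟨h1, h2, h, h3⟩

/-! ### `sInf` on finsets and the greedy characterization -/

lemma sInf_coe_finset (F : Finset ℕ) (h : F.Nonempty) : sInf (↑F : Set ℕ) = F.min' h := by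
  apply le_antisymm
  · exact Nat.sInf_le (Finset.min'_mem F h)
  · exact Finset.min'_le F _ (Nat.sInf_mem (h.to_set))

/-- The greedy clauses with ambient set `↑R` amount to `t = chooseStep` with target `m`. -/
lemma greedy_iff_chooseStep (R : Finset ℕ) (m t : ℕ) (ht : t ∈ R) :
    ((({x ∈ (↑R : Set ℕ) | m ≤ x}).Nonempty →
        t = sInf {x ∈ (↑R : Set ℕ) | m ≤ x}) ∧
      (¬ ({x ∈ (↑R : Set ℕ) | m ≤ x}).Nonempty →
        t = sInf (↑R : Set ℕ)))
    ↔ t = chooseStep (fun _ => m) 0 R := by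
  have hset : {x ∈ (↑R : Set ℕ) | m ≤ x} = ↑(R.filter fun x => m ≤ x) := by
    ext x; simp
  have hne : ({x ∈ (↑R : Set ℕ) | m ≤ x}).Nonempty ↔ (R.filter fun x => m ≤ x).Nonempty := by
    rw [hset, Finset.coe_nonempty]
  unfold chooseStep
  by_cases h : (R.filter fun x => m ≤ x).Nonempty
  · rw [dif_pos h]
    constructor
    · rintro ⟨h1, _⟩
      rw [h1 (hne.mpr h), hset, sInf_coe_finset _ h]
    · intro h1
      refine ⟨fun _ => ?_, fun hc => absurd (hne.mpr h) hc⟩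
      rw [hset, sInf_coe_finset _ h, h1]
  · rw [dif_neg h, dif_pos ⟨t, ht⟩]
    constructor
    · rintro ⟨_, h2⟩
      exact (h2 (fun hc => h (hne.mp hc))).trans (sInf_coe_finset _ ⟨t, ht⟩)
    · intro h1
      refine ⟨fun hc => absurd (hne.mp hc) h, fun _ => ?_⟩
      exact h1.trans (sInf_coe_finset _ ⟨t, ht⟩).symm

/-- Restatement of `GreedyRule` via `chooseStep`. -/
lemma greedyRule_iff {n : ℕ} {mu : ℕ → ℕ} {τ : ℕ × ℕ → ℕ} :
    GreedyRule n mu τ ↔ ∀ u ∈ dgF n mu, 2 ≤ u.2 →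
      τ u = chooseStep (fun _ => τ (dbox u)) 0 ((armF n mu u).image τ ∪ {τ u}) := by
  unfold GreedyRule
  refine forall_congr' fun u => forall_congr' fun hu => forall_congr' fun h2 => ?_
  have hcoe : τ '' ↑(armF n mu u) ∪ {τ u} = ↑((armF n mu u).image τ ∪ {τ u}) := by
    simp
  rw [hcoe]
  exact greedy_iff_chooseStep _ _ _ (by simp)

end CO

namespace CO

/-! ### Fillings as a finset of genuine functions -/

open Classical in
/-- The finset of fillings (normalized to vanish off the diagram). -/
noncomputable def FillF (n : ℕ) (mu : ℕ → ℕ) (a k : ℕ → ℕ) : Finset ((ℕ × ℕ) → ℕ) :=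
  ((Fintype.piFinset fun _ : {u // u ∈ dgF n mu} => Finset.Icc 1 n).filter
      fun f => CCond n mu a k (ext n mu f)).image (ext n mu)

lemma mem_FillF {n : ℕ} {mu a k : ℕ → ℕ} {σ : (ℕ × ℕ) → ℕ} :
    σ ∈ FillF n mu a k ↔ CCond n mu a k σ ∧ ∀ u, u ∉ dgF n mu → σ u = 0 := by
  classical
  unfold FillF
  simp only [Finset.mem_image, Finset.mem_filter, Fintype.mem_piFinset]
  constructor
  · rintro ⟨f, ⟨_, hC⟩, rfl⟩
    refine ⟨hC, fun u hu => ?_⟩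
    unfold ext; rw [dif_neg hu]
  · rintro ⟨hC, h0⟩
    have he : ext n mu (fun u : {u // u ∈ dgF n mu} => σ u.1) = σ := by
      funext u
      unfold ext
      by_cases hu : u ∈ dgF n mu
      · rw [dif_pos hu]
      · rw [dif_neg hu]; exact (h0 u hu).symm
    refine ⟨fun u => σ u.1, ⟨⟨fun u => ?_, by rw [he]; exact hC⟩, he⟩⟩
    rw [Finset.mem_Icc]; exact hC.1 u.1 u.2

open Classical in
lemma cCoef_eq_sum_FillF (n : ℕ) (mu a k : ℕ → ℕ) :
    cCoef n mu a k = ∑ σ ∈ FillF n mu a k, Polynomial.X ^ ascStat n mu σ := by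
  classical
  unfold FillF cCoef
  rw [Finset.sum_image]
  intro f _ g _ hfg
  funext u
  have := congrFun hfg u.1
  unfold ext at this
  rwa [dif_pos u.2, dif_pos u.2] at this

end CO

namespace CO

/-! ### Support of an antidominant composition -/

lemma card_filter_two_le {n : ℕ} {mu : ℕ → ℕ} (hanti : Antidominant n mu)
    {s' : ℕ} (hs' : s' = ((Finset.Icc 1 n).filter fun i => 2 ≤ mu i).card) :
    s' ≤ n := by
  calc s' ≤ (Finset.Icc 1 n).card := hs' ▸ Finset.card_filter_le _ _
  _ = n := by rw [Nat.card_Icc]; omega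

lemma two_le_mu_iff {n : ℕ} {mu : ℕ → ℕ} (hanti : Antidominant n mu)
    {s' : ℕ} (hs' : s' = ((Finset.Icc 1 n).filter fun i => 2 ≤ mu i).card)
    {i : ℕ} (h1 : 1 ≤ i) (h2 : i ≤ n) : 2 ≤ mu i ↔ n - s' + 1 ≤ i := by
  have hsn : s' ≤ n := card_filter_two_le hanti hs'
  constructor
  · intro hmu
    by_contra hc
    push_neg at hc
    have hsub : Finset.Icc i n ⊆ (Finset.Icc 1 n).filter fun j => 2 ≤ mu j := by
      intro j hj
      rw [Finset.mem_Icc] at hj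
      rw [Finset.mem_filter, Finset.mem_Icc]
      exact ⟨⟨le_trans h1 hj.1, hj.2⟩, le_trans hmu (hanti i j h1 hj.1 hj.2)⟩
    have := Finset.card_le_card hsub
    rw [← hs', Nat.card_Icc] at this
    omega
  · intro hi
    by_contra hc
    push_neg at hc
    have hsub : ((Finset.Icc 1 n).filter fun j => 2 ≤ mu j) ⊆ Finset.Icc (i + 1) n := by
      intro j hj
      rw [Finset.mem_filter, Finset.mem_Icc] at hj
      rw [Finset.mem_Icc]
      refine ⟨?_, hj.1.2⟩
      by_contra hji
      push_neg at hji
      have := hanti j i hj.1.1 (by omega) h2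
      omega
    have := Finset.card_le_card hsub
    rw [← hs', Nat.card_Icc] at this
    omega

lemma one_le_mu_iff {n : ℕ} {mu : ℕ → ℕ} (hanti : Antidominant n mu)
    {s : ℕ} (hs : s ≤ n)
    (hzero : ∀ i, 1 ≤ i → i ≤ n - s → mu i = 0) (hpos : 1 ≤ mu (n - s + 1))
    {i : ℕ} (h1 : 1 ≤ i) (h2 : i ≤ n) : 1 ≤ mu i ↔ n - s + 1 ≤ i := by
  constructor
  · intro hmu
    by_contra hc
    push_neg at hc
    have := hzero i h1 (by omega)
    omega
  · intro hi
    exact le_trans hpos (hanti (n - s + 1) i (by omega) hi h2)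

/-! ### The composition `λ` -/

lemma lam_anti {n : ℕ} {mu : ℕ → ℕ} (hanti : Antidominant n mu)
    {lam : ℕ → ℕ} (hlam : lam = fun i => mu i - 1) : Antidominant n lam := by
  intro i j h1 h2 h3
  rw [hlam]
  have := hanti i j h1 h2 h3
  simp only
  omega

lemma mem_dgF_lam {n : ℕ} {mu lam : ℕ → ℕ} (hlam : lam = fun i => mu i - 1)
    {u : ℕ × ℕ} : u ∈ dgF n lam ↔ (u.1, u.2 + 1) ∈ dgF n mu ∧ 1 ≤ u.2 := by
  rw [mem_dgF, mem_dgF, hlam]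
  simp only
  omega

/-! ### Arm simplification for antidominant compositions -/

lemma armF_antidominant {n : ℕ} {nu : ℕ → ℕ} (hanti : Antidominant n nu)
    {u : ℕ × ℕ} (hu : u ∈ dgF n nu) :
    armF n nu u = (dgF n nu).filter fun v => v.1 < u.1 ∧ v.2 = u.2 := by
  rw [mem_dgF] at hu
  unfold armF
  ext v
  rw [Finset.mem_union, Finset.mem_filter, Finset.mem_filter, Finset.mem_filter]
  constructor
  · rintro (⟨hv, h1, h2, _⟩ | ⟨hv, h1, _, h3⟩)
    · exact ⟨hv, h1, h2⟩
    · exfalso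
      rw [mem_augF] at hv
      have := hanti u.1 v.1 hu.1 (le_of_lt h1) hv.2.1
      omega
  · rintro ⟨hv, h1, h2⟩
    left
    refine ⟨hv, h1, h2, ?_⟩
    rw [mem_dgF] at hv
    exact hanti v.1 u.1 hv.1 (le_of_lt h1) hu.2.1

lemma armF_shift {n : ℕ} {mu lam : ℕ → ℕ} (hanti : Antidominant n mu)
    (hlam : lam = fun i => mu i - 1)
    {u : ℕ × ℕ} (hu : u ∈ dgF n lam) :
    armF n mu (u.1, u.2 + 1) = (armF n lam u).image fun v => (v.1, v.2 + 1) := by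
  have hlanti := lam_anti hanti hlam
  have humu : (u.1, u.2 + 1) ∈ dgF n mu := ((mem_dgF_lam hlam).mp hu).1
  rw [armF_antidominant hanti humu, armF_antidominant hlanti hu]
  ext v
  simp only [Finset.mem_filter, Finset.mem_image]
  constructor
  · rintro ⟨hv, h1, h2⟩
    refine ⟨(v.1, v.2 - 1), ⟨?_, ?_, ?_⟩, ?_⟩
    · rw [mem_dgF_lam hlam]
      have h2' : v.2 - 1 + 1 = v.2 := by
        rw [mem_dgF] at hu; omega
      constructor
      · rw [h2']; exact hv
      · rw [mem_dgF] at hu; omega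
    · exact h1
    · rw [mem_dgF] at hu; omega
    · have : v.2 - 1 + 1 = v.2 := by rw [mem_dgF] at hu; omega
      rw [this]
  · rintro ⟨w, ⟨hw, h1, h2⟩, rfl⟩
    refine ⟨?_, h1, by omega⟩
    rw [mem_dgF_lam hlam] at hw
    exact hw.1

end CO

namespace CO

/-! ### Properties of the greedy selection -/

lemma chooseStep_mem {a : ℕ → ℕ} {j : ℕ} {R : Finset ℕ} (hR : R.Nonempty) :
    chooseStep a j R ∈ R := by
  unfold chooseStep
  by_cases h : (R.filter fun x => a j ≤ x).Nonempty
  · rw [dif_pos h]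
    exact Finset.mem_of_mem_filter _ (Finset.min'_mem _ h)
  · rw [dif_neg h, dif_pos hR]
    exact Finset.min'_mem _ hR

lemma chooseStep_congr {a a' : ℕ → ℕ} {j j' : ℕ} (R : Finset ℕ) (h : a j = a' j') :
    chooseStep a j R = chooseStep a' j' R := by
  unfold chooseStep; rw [h]

lemma chooseStep_sandwich {a : ℕ → ℕ} {j : ℕ} {R : Finset ℕ} {x : ℕ}
    (hx : x ∈ R) (hax : a j ≤ x) :
    a j ≤ chooseStep a j R ∧ chooseStep a j R ≤ x := by
  have hne : (R.filter fun y => a j ≤ y).Nonempty := ⟨x, Finset.mem_filter.mpr ⟨hx, hax⟩⟩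
  unfold chooseStep
  rw [dif_pos hne]
  constructor
  · have := Finset.min'_mem _ hne
    exact (Finset.mem_filter.mp this).2
  · exact Finset.min'_le _ _ (Finset.mem_filter.mpr ⟨hx, hax⟩)

/-! ### Properties of `remaining` and `bval` -/

section BvalGeneric

variable {a : ℕ → ℕ} {n s' : ℕ} {B : Finset ℕ}

lemma remaining_subset (d : ℕ) : remaining a n B d ⊆ B := by
  induction d with
  | zero => exact Finset.Subset.refl _
  | succ d ih => exact (Finset.erase_subset _ _).trans ih

lemma remaining_card (hB : B.card = s') {d : ℕ} (hd : d ≤ s') :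
    (remaining a n B d).card = s' - d := by
  induction d with
  | zero => simpa [remaining] using hB
  | succ d ih =>
    have hd' : d ≤ s' := by omega
    have hcard := ih hd'
    have hne : (remaining a n B d).Nonempty := by
      rw [← Finset.card_pos, hcard]; omega
    show ((remaining a n B d).erase _).card = _
    rw [Finset.card_erase_of_mem (chooseStep_mem hne), hcard]
    omega

lemma remaining_succ (d : ℕ) (hd : d ≤ n) :
    remaining a n B (d + 1) = (remaining a n B d).erase (bval a n B (n - d)) := by
  show (remaining a n B d).erase (chooseStep a (n - d) _) = _
  unfold bval
  have : n - (n - d) = d := by omega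
  rw [this]

lemma remaining_antitone {d d' : ℕ} (h : d ≤ d') : remaining a n B d' ⊆ remaining a n B d := by
  induction d' with
  | zero => have : d = 0 := by omega
            rw [this]
  | succ e ih =>
    rcases Nat.lt_or_ge d (e + 1) with h' | h'
    · exact ((Finset.erase_subset _ _).trans (ih (by omega)))
    · have : d = e + 1 := by omega
      rw [this]

lemma bval_mem_remaining (hB : B.card = s') {j : ℕ} (hj1 : n - s' + 1 ≤ j) (hj2 : j ≤ n)
    (hs'n : s' ≤ n) :
    bval a n B j ∈ remaining a n B (n - j) := by
  have hne : (remaining a n B (n - j)).Nonempty := by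
    rw [← Finset.card_pos, remaining_card hB (by omega)]
    omega
  exact chooseStep_mem hne

lemma bval_not_mem_later {i j : ℕ} (hij : i < j) (hj : j ≤ n) :
    bval a n B j ∉ remaining a n B (n - i) := by
  have hstep := remaining_succ (a := a) (n := n) (B := B) (n - j) (by omega)
  have hj' : n - (n - j) = j := by omega
  rw [hj'] at hstep
  have hsub : remaining a n B (n - i) ⊆ remaining a n B (n - j + 1) :=
    remaining_antitone (by omega)
  intro hc
  have := hsub hc
  rw [hstep] at this
  exact (Finset.ne_of_mem_erase this) rfl

lemma bval_injOn (hB : B.card = s') (hs'n : s' ≤ n)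
    {i j : ℕ} (hi : n - s' + 1 ≤ i) (hij : i < j) (hj : j ≤ n) :
    bval a n B i ≠ bval a n B j := by
  intro hc
  have h1 : bval a n B i ∈ remaining a n B (n - i) :=
    bval_mem_remaining hB hi (by omega) hs'n
  have h2 := bval_not_mem_later (a := a) (B := B) hij hj
  rw [← hc] at h2
  exact h2 h1

/-- `B` decomposes as remaining candidates plus already chosen values. -/
lemma B_eq_remaining_union (hB : B.card = s') (hs'n : s' ≤ n) {d : ℕ} (hd : d ≤ s') :
    B = remaining a n B d ∪ (Finset.Icc (n - d + 1) n).image (bval a n B) := by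
  induction d with
  | zero =>
    have : Finset.Icc (n - 0 + 1) n = ∅ := by
      apply Finset.Icc_eq_empty; omega
    rw [this]
    simp [remaining]
  | succ d ih =>
    have hd' : d ≤ s' := by omega
    have hprev := ih hd'
    have hbmem : bval a n B (n - d) ∈ remaining a n B d := by
      have := bval_mem_remaining (a := a) hB (j := n - d) (by omega) (by omega) hs'n
      have hnd : n - (n - d) = d := by omega
      rwa [hnd] at this
    have hins : remaining a n B d = insert (bval a n B (n - d)) (remaining a n B (d + 1)) := by
      rw [remaining_succ d (by omega), Finset.insert_erase hbmem]
    have hicc : Finset.Icc (n - (d + 1) + 1) n = insert (n - d) (Finset.Icc (n - d + 1) n) := by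
      ext x
      rw [Finset.mem_insert, Finset.mem_Icc, Finset.mem_Icc]
      omega
    rw [hicc, Finset.image_insert, Finset.union_insert, ← Finset.insert_union, ← hins]
    exact hprev

lemma B_eq_image_bval (hB : B.card = s') (hs'n : s' ≤ n) :
    B = (Finset.Icc (n - s' + 1) n).image (bval a n B) := by
  have h := B_eq_remaining_union (a := a) hB hs'n (le_refl s')
  have hempty : remaining a n B s' = ∅ := by
    rw [← Finset.card_eq_zero, remaining_card hB (le_refl s')]
    omega
  rw [hempty, Finset.empty_union] at h
  exact h

lemma remaining_eq_image (hB : B.card = s') (hs'n : s' ≤ n)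
    {j : ℕ} (hj1 : n - s' ≤ j) (hj2 : j ≤ n) :
    remaining a n B (n - j) = (Finset.Icc (n - s' + 1) j).image (bval a n B) := by
  have hdec := B_eq_remaining_union (a := a) hB hs'n (d := n - j) (by omega)
  have hj' : n - (n - j) = j := by omega
  rw [hj'] at hdec
  have hsplit : (Finset.Icc (n - s' + 1) n).image (bval a n B)
      = (Finset.Icc (n - s' + 1) j).image (bval a n B)
        ∪ (Finset.Icc (j + 1) n).image (bval a n B) := by
    rw [← Finset.image_union]
    congr 1
    ext x
    rw [Finset.mem_union, Finset.mem_Icc, Finset.mem_Icc, Finset.mem_Icc]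
    omega
  have hBimg := B_eq_image_bval (a := a) hB hs'n
  -- two disjoint decompositions of B
  apply Finset.ext
  intro x
  constructor
  · intro hx
    have hxB : x ∈ B := remaining_subset _ hx
    rw [hBimg, hsplit, Finset.mem_union] at hxB
    rcases hxB with h | h
    · exact h
    · exfalso
      rw [Finset.mem_image] at h
      obtain ⟨i, hi, rfl⟩ := h
      rw [Finset.mem_Icc] at hi
      exact bval_not_mem_later (by omega) (by omega) hx
  · intro hx
    rw [Finset.mem_image] at hx
    obtain ⟨i, hi, rfl⟩ := hx
    rw [Finset.mem_Icc] at hi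
    have hmem : bval a n B i ∈ remaining a n B (n - i) :=
      bval_mem_remaining hB (by omega) (by omega) hs'n
    exact remaining_antitone (a := a) (n := n) (B := B) (d := n - j) (d' := n - i)
      (by omega) hmem

lemma bval_eq_chooseStep_image (hB : B.card = s') (hs'n : s' ≤ n)
    {j : ℕ} (hj1 : n - s' + 1 ≤ j) (hj2 : j ≤ n) :
    bval a n B j = chooseStep a j ((Finset.Icc (n - s' + 1) j).image (bval a n B)) := by
  show chooseStep a j (remaining a n B (n - j)) = _
  rw [remaining_eq_image hB hs'n (by omega) hj2]

end BvalGeneric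

end CO

namespace CO

/-! ### The shift maps and the bottom-row set -/

/-- Deleting the bottom row: the filling of `λ` induced by a filling of `μ`. -/
noncomputable def shDown (n : ℕ) (lam : ℕ → ℕ) (σ : ℕ × ℕ → ℕ) : ℕ × ℕ → ℕ :=
  fun u => if u ∈ dgF n lam then σ (u.1, u.2 + 1) else 0

/-- Adding a bottom row `a`: the filling of `μ` induced by a filling of `λ`. -/
noncomputable def shUp (n : ℕ) (mu a : ℕ → ℕ) (g : ℕ × ℕ → ℕ) : ℕ × ℕ → ℕ :=
  fun u => if u ∈ dgF n mu then (if u.2 = 1 then a u.1 else g (u.1, u.2 - 1)) else 0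

/-- The set of values in row 2. -/
noncomputable def rowT (n s' : ℕ) (σ : ℕ × ℕ → ℕ) : Finset ℕ :=
  (Finset.Icc (n - s' + 1) n).image fun i => σ (i, 2)

section Main

variable {n s s' : ℕ} {mu lam a : ℕ → ℕ}

/-- Membership in row 2 of the diagram of `μ`. -/
lemma mem_dg2 (hanti : Antidominant n mu)
    (hs' : s' = ((Finset.Icc 1 n).filter fun i => 2 ≤ mu i).card) {i : ℕ} :
    (i, 2) ∈ dgF n mu ↔ n - s' + 1 ≤ i ∧ i ≤ n := by
  rw [mem_dgF]
  simp only
  constructor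
  · rintro ⟨h1, h2, _, h4⟩
    exact ⟨(two_le_mu_iff hanti hs' h1 h2).mp h4, h2⟩
  · rintro ⟨h1, h2⟩
    have h0 : 1 ≤ i := by omega
    exact ⟨h0, h2, by omega, (two_le_mu_iff hanti hs' h0 h2).mpr h1⟩

/-- Membership in row 1 of the diagram of `μ`. -/
lemma mem_dg1 (hanti : Antidominant n mu) (hsn : s ≤ n)
    (hzero : ∀ i, 1 ≤ i → i ≤ n - s → mu i = 0) (hpos : 1 ≤ mu (n - s + 1)) {i : ℕ} :
    (i, 1) ∈ dgF n mu ↔ n - s + 1 ≤ i ∧ i ≤ n := by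
  rw [mem_dgF]
  simp only
  constructor
  · rintro ⟨h1, h2, _, h4⟩
    exact ⟨(one_le_mu_iff hanti hsn hzero hpos h1 h2).mp h4, h2⟩
  · rintro ⟨h1, h2⟩
    have h0 : 1 ≤ i := by omega
    exact ⟨h0, h2, le_refl _, (one_le_mu_iff hanti hsn hzero hpos h0 h2).mpr h1⟩

/-- The arm of a row-2 box. -/
lemma armF_row2 (hanti : Antidominant n mu)
    (hs' : s' = ((Finset.Icc 1 n).filter fun i => 2 ≤ mu i).card)
    {j : ℕ} (hj1 : n - s' + 1 ≤ j) (hj2 : j ≤ n) :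
    armF n mu (j, 2) = (Finset.Icc (n - s' + 1) (j - 1)).image fun i => (i, 2) := by
  rw [armF_antidominant hanti ((mem_dg2 hanti hs').mpr ⟨hj1, hj2⟩)]
  ext v
  simp only [Finset.mem_filter, Finset.mem_image, Finset.mem_Icc]
  constructor
  · rintro ⟨hv, h1, h2⟩
    refine ⟨v.1, ⟨?_, by omega⟩, ?_⟩
    · rw [mem_dgF] at hv
      have := (two_le_mu_iff hanti hs' hv.1 hv.2.1).mp (by omega)
      exact this
    · rw [Prod.ext_iff]; exact ⟨rfl, h2.symm⟩
  · rintro ⟨i, ⟨h1, h2⟩, rfl⟩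
    exact ⟨(mem_dg2 hanti hs').mpr ⟨h1, by omega⟩, by simp; omega, rfl⟩

/-- The greedy clause at a row-2 box, in terms of `chooseStep` relative to `a`. -/
lemma greedy_row2_iff (hanti : Antidominant n mu)
    (hs' : s' = ((Finset.Icc 1 n).filter fun i => 2 ≤ mu i).card)
    {σ : ℕ × ℕ → ℕ} {j : ℕ} (hj1 : n - s' + 1 ≤ j) (hj2 : j ≤ n)
    (hrow1 : σ (j, 1) = a j) :
    (σ (j, 2) = chooseStep (fun _ => σ (dbox (j, 2))) 0
        ((armF n mu (j, 2)).image σ ∪ {σ (j, 2)}))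
    ↔ σ (j, 2) = chooseStep a j ((Finset.Icc (n - s' + 1) j).image fun i => σ (i, 2)) := by
  have hdb : dbox (j, 2) = (j, 1) := rfl
  have hR : (armF n mu (j, 2)).image σ ∪ {σ (j, 2)}
      = (Finset.Icc (n - s' + 1) j).image fun i => σ (i, 2) := by
    rw [armF_row2 hanti hs' hj1 hj2, Finset.image_image]
    have hsplit : Finset.Icc (n - s' + 1) j = insert j (Finset.Icc (n - s' + 1) (j - 1)) := by
      ext x
      rw [Finset.mem_insert, Finset.mem_Icc, Finset.mem_Icc]
      omega
    rw [hsplit, Finset.image_insert, Finset.union_comm, ← Finset.insert_eq]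
    rfl
  rw [hR, hdb, hrow1]
  rw [chooseStep_congr (a := fun _ => a j) (a' := a) (j := 0) (j' := j) _ rfl]

end Main

end CO

namespace CO

section Forward

variable {n s s' : ℕ} {mu lam a : ℕ → ℕ} {σ : ℕ × ℕ → ℕ}

/-- Distinct values in row 2 (from non-attacking). -/
lemma row2_ne (hanti : Antidominant n mu)
    (hs' : s' = ((Finset.Icc 1 n).filter fun i => 2 ≤ mu i).card)
    (hna : ∀ u ∈ dgF n mu, ∀ v ∈ dgF n mu, Attack u v → σ u ≠ σ v)
    {i i' : ℕ} (h1 : n - s' + 1 ≤ i) (h2 : i ≤ n) (h1' : n - s' + 1 ≤ i') (h2' : i' ≤ n)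
    (hne : i ≠ i') : σ (i, 2) ≠ σ (i', 2) := by
  refine hna (i, 2) ((mem_dg2 hanti hs').mpr ⟨h1, h2⟩) (i', 2)
    ((mem_dg2 hanti hs').mpr ⟨h1', h2'⟩) ⟨?_, Or.inl rfl⟩
  simp [Prod.ext_iff, hne]

/-- The greedy rule at row-2 boxes, solved form. -/
lemma sigma_row2_greedy (hanti : Antidominant n mu)
    (hs' : s' = ((Finset.Icc 1 n).filter fun i => 2 ≤ mu i).card)
    (hgr : GreedyRule n mu σ)
    (hrow1 : ∀ j, (j, 1) ∈ dgF n mu → σ (j, 1) = a j)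
    {j : ℕ} (hj1 : n - s' + 1 ≤ j) (hj2 : j ≤ n) :
    σ (j, 2) = chooseStep a j ((Finset.Icc (n - s' + 1) j).image fun i => σ (i, 2)) := by
  have hmem : (j, 2) ∈ dgF n mu := (mem_dg2 hanti hs').mpr ⟨hj1, hj2⟩
  have hmem1 : (j, 1) ∈ dgF n mu := by
    rw [mem_dgF] at hmem ⊢
    simp only at hmem ⊢
    omega
  have hg := (greedyRule_iff.mp hgr) (j, 2) hmem (le_refl 2)
  exact (greedy_row2_iff hanti hs' hj1 hj2 (hrow1 j hmem1)).mp hg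

/-- Identification of the `remaining` sets for `B = rowT n s' σ`. -/
lemma remaining_forward (hanti : Antidominant n mu)
    (hs' : s' = ((Finset.Icc 1 n).filter fun i => 2 ≤ mu i).card)
    (hna : ∀ u ∈ dgF n mu, ∀ v ∈ dgF n mu, Attack u v → σ u ≠ σ v)
    (hgr : GreedyRule n mu σ)
    (hrow1 : ∀ j, (j, 1) ∈ dgF n mu → σ (j, 1) = a j)
    {d : ℕ} (hd : d ≤ s') :
    remaining a n (rowT n s' σ) d = (Finset.Icc (n - s' + 1) (n - d)).image fun i => σ (i, 2) := by
  have hs'n : s' ≤ n := card_filter_two_le hanti hs'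
  induction d with
  | zero =>
    show rowT n s' σ = _
    rw [Nat.sub_zero]
    rfl
  | succ d ih =>
    have hih := ih (by omega)
    show (remaining a n (rowT n s' σ) d).erase
      (chooseStep a (n - d) (remaining a n (rowT n s' σ) d)) = _
    rw [hih]
    rw [← sigma_row2_greedy hanti hs' hgr hrow1 (by omega) (by omega)]
    ext x
    simp only [Finset.mem_erase, Finset.mem_image, Finset.mem_Icc]
    constructor
    · rintro ⟨hxne, i, ⟨hi1, hi2⟩, rfl⟩
      refine ⟨i, ⟨hi1, ?_⟩, rfl⟩
      have : i ≠ n - d := fun hc => hxne (by rw [hc])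
      omega
    · rintro ⟨i, ⟨hi1, hi2⟩, rfl⟩
      refine ⟨?_, i, ⟨hi1, by omega⟩, rfl⟩
      exact row2_ne hanti hs' hna hi1 (by omega) (by omega) (by omega) (by omega)

/-- For a filling `σ` of `μ`, the greedy tuple of `B = rowT n s' σ` is the second row. -/
lemma bval_forward (hanti : Antidominant n mu)
    (hs' : s' = ((Finset.Icc 1 n).filter fun i => 2 ≤ mu i).card)
    (hna : ∀ u ∈ dgF n mu, ∀ v ∈ dgF n mu, Attack u v → σ u ≠ σ v)
    (hgr : GreedyRule n mu σ)
    (hrow1 : ∀ j, (j, 1) ∈ dgF n mu → σ (j, 1) = a j)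
    {j : ℕ} (hj1 : n - s' + 1 ≤ j) (hj2 : j ≤ n) :
    bval a n (rowT n s' σ) j = σ (j, 2) := by
  have hs'n : s' ≤ n := card_filter_two_le hanti hs'
  show chooseStep a j (remaining a n (rowT n s' σ) (n - j)) = _
  rw [remaining_forward hanti hs' hna hgr hrow1 (by omega)]
  have hnj : n - (n - j) = j := by omega
  rw [hnj]
  exact (sigma_row2_greedy hanti hs' hgr hrow1 hj1 hj2).symm

/-- The bottom-row set of a filling of `μ` is a subset of `{1, …, n}` of size `s'`. -/
lemma rowT_mem_powersetCard (hanti : Antidominant n mu)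
    (hs' : s' = ((Finset.Icc 1 n).filter fun i => 2 ≤ mu i).card)
    (hrange : ∀ u ∈ dgF n mu, 1 ≤ σ u ∧ σ u ≤ n)
    (hna : ∀ u ∈ dgF n mu, ∀ v ∈ dgF n mu, Attack u v → σ u ≠ σ v) :
    rowT n s' σ ∈ Finset.powersetCard s' (Finset.Icc 1 n) := by
  have hs'n : s' ≤ n := card_filter_two_le hanti hs'
  rw [Finset.mem_powersetCard]
  constructor
  · intro x hx
    rw [rowT, Finset.mem_image] at hx
    obtain ⟨i, hi, rfl⟩ := hx
    rw [Finset.mem_Icc] at hi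
    have := hrange (i, 2) ((mem_dg2 hanti hs').mpr ⟨hi.1, hi.2⟩)
    rw [Finset.mem_Icc]
    exact this
  · rw [rowT, Finset.card_image_of_injOn, Nat.card_Icc]
    · omega
    · intro x hx y hy hxy
      rw [Finset.mem_coe, Finset.mem_Icc] at hx hy
      by_contra hne
      exact row2_ne hanti hs' hna hx.1 hx.2 hy.1 hy.2 hne hxy

end Forward

end CO

namespace CO

section Transfer

variable {n s s' : ℕ} {mu lam a : ℕ → ℕ} {B : Finset ℕ} {σ g : ℕ × ℕ → ℕ}

/-- The chosen value at an earlier column differs from later bottom-row values. -/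
lemma bval_ne_a (hB : B.card = s') (hs'n : s' ≤ n)
    {i' i : ℕ} (h1 : n - s' + 1 ≤ i') (h2 : i' < i) (h3 : i ≤ n) :
    bval a n B i' ≠ a i := by
  intro hc
  have hmem : bval a n B i' ∈ remaining a n B (n - i) :=
    remaining_antitone (a := a) (n := n) (B := B) (by omega)
      (bval_mem_remaining hB h1 (by omega) hs'n)
  have hsand := chooseStep_sandwich (a := a) (j := i) hmem (le_of_eq hc.symm)
  have hbi : bval a n B i = chooseStep a i (remaining a n B (n - i)) := rfl
  have heq : bval a n B i = bval a n B i' := by omega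
  exact bval_injOn hB hs'n h1 h2 h3 heq.symm

/-- The greedy clause transfers through the row shift (rows `≥ 3` of `μ`). -/
lemma greedy_shift_iff (hanti : Antidominant n mu) (hlam : lam = fun i => mu i - 1)
    (hg : ∀ v ∈ dgF n lam, g v = σ (v.1, v.2 + 1))
    {u : ℕ × ℕ} (hu : u ∈ dgF n lam) (h2 : 2 ≤ u.2) :
    (σ (u.1, u.2 + 1) = chooseStep (fun _ => σ (dbox (u.1, u.2 + 1))) 0
        ((armF n mu (u.1, u.2 + 1)).image σ ∪ {σ (u.1, u.2 + 1)}))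
    ↔ g u = chooseStep (fun _ => g (dbox u)) 0 ((armF n lam u).image g ∪ {g u}) := by
  have hval : σ (u.1, u.2 + 1) = g u := by
    rw [hg u hu]
  have hmemu : 1 ≤ u.2 ∧ u.2 ≤ lam u.1 := by
    rw [mem_dgF] at hu; exact ⟨hu.2.2.1, hu.2.2.2⟩
  have hdbmem : (u.1, u.2 - 1) ∈ dgF n lam := by
    rw [mem_dgF] at hu ⊢
    simp only at hu ⊢
    omega
  have hdb : σ (dbox (u.1, u.2 + 1)) = g (dbox u) := by
    have h1 : dbox (u.1, u.2 + 1) = (u.1, u.2) := by simp [dbox]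
    have h2' : dbox u = (u.1, u.2 - 1) := rfl
    rw [h1, h2', hg _ hdbmem]
    have : u.2 - 1 + 1 = u.2 := by omega
    rw [this]
  have himg : (armF n mu (u.1, u.2 + 1)).image σ = (armF n lam u).image g := by
    rw [armF_shift hanti hlam hu, Finset.image_image]
    apply Finset.image_congr
    intro v hv
    rw [Finset.mem_coe, armF_antidominant (lam_anti hanti hlam) hu, Finset.mem_filter] at hv
    exact (hg v hv.1).symm
  rw [hval, hdb, himg]

/-- The count of each value splits into the bottom-row contribution plus the rest. -/
lemma count_split (hanti : Antidominant n mu) (hsn : s ≤ n)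
    (hzero : ∀ i, 1 ≤ i → i ≤ n - s → mu i = 0) (hpos : 1 ≤ mu (n - s + 1))
    (hlam : lam = fun i => mu i - 1)
    (hainj : ∀ j ∈ Finset.Icc (n - s + 1) n, ∀ j' ∈ Finset.Icc (n - s + 1) n,
      a j = a j' → j = j')
    (hrow1 : ∀ j, (j, 1) ∈ dgF n mu → σ (j, 1) = a j)
    (hg : ∀ v ∈ dgF n lam, g v = σ (v.1, v.2 + 1)) (i : ℕ) :
    ((dgF n mu).filter fun u => σ u = i).card
      = (if i ∈ (Finset.Icc (n - s + 1) n).image a then 1 else 0)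
        + ((dgF n lam).filter fun u => g u = i).card := by
  classical
  have hXY : (dgF n mu).filter (fun u => σ u = i)
      = (((Finset.Icc (n - s + 1) n).filter fun j => a j = i).image fun j => (j, 1))
        ∪ (((dgF n lam).filter fun v => g v = i).image fun v => (v.1, v.2 + 1)) := by
    ext u
    rcases u with ⟨u1, u2⟩
    simp only [Finset.mem_filter, Finset.mem_union, Finset.mem_image, Finset.mem_Icc,
      Prod.mk.injEq]
    constructor
    · rintro ⟨hu, hσ⟩
      have hu' := mem_dgF.mp hu
      simp only at hu'
      rcases Nat.lt_or_ge u2 2 with h | h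
      · left
        have hu2 : u2 = 1 := by omega
        subst hu2
        refine ⟨u1, ⟨⟨?_, hu'.2.1⟩, ?_⟩, rfl, rfl⟩
        · exact ((mem_dg1 hanti hsn hzero hpos).mp hu).1
        · rw [← hσ]; exact (hrow1 u1 hu).symm
      · right
        have hvmem : (u1, u2 - 1) ∈ dgF n lam := by
          rw [mem_dgF_lam hlam]
          simp only
          have h21 : u2 - 1 + 1 = u2 := by omega
          rw [h21]
          exact ⟨hu, by omega⟩
        refine ⟨(u1, u2 - 1), ⟨hvmem, ?_⟩, rfl, by omega⟩
        rw [hg _ hvmem]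
        simp only
        have h21 : u2 - 1 + 1 = u2 := by omega
        rw [h21]
        exact hσ
    · rintro (⟨j, ⟨⟨hj1, hj2⟩, hji⟩, hj3, hj4⟩ | ⟨v, ⟨hv, hgv⟩, hv3, hv4⟩)
      · subst hj3; subst hj4
        have hu1 : (j, 1) ∈ dgF n mu := (mem_dg1 hanti hsn hzero hpos).mpr ⟨hj1, hj2⟩
        exact ⟨hu1, by rw [hrow1 j hu1]; exact hji⟩
      · subst hv3; subst hv4
        rw [mem_dgF_lam hlam] at hv
        exact ⟨hv.1, by rw [← hg v ((mem_dgF_lam hlam).mpr hv)]; exact hgv⟩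
  rw [hXY, Finset.card_union_of_disjoint, Finset.card_image_of_injective _
      (fun x y hxy => by simpa using hxy),
    Finset.card_image_of_injective _ (fun x y hxy => by
      rw [Prod.ext_iff] at hxy
      simp only at hxy
      exact Prod.ext hxy.1 (by omega))]
  · congr 1
    by_cases himg : i ∈ (Finset.Icc (n - s + 1) n).image a
    · rw [if_pos himg]
      rw [Finset.mem_image] at himg
      obtain ⟨j0, hj0, hj0i⟩ := himg
      rw [Finset.card_eq_one]
      refine ⟨j0, ?_⟩
      ext j
      rw [Finset.mem_filter, Finset.mem_singleton]
      constructor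
      · rintro ⟨hj, hji⟩
        exact hainj j hj j0 hj0 (by rw [hji, hj0i])
      · rintro rfl
        exact ⟨hj0, hj0i⟩
    · rw [if_neg himg]
      rw [Finset.card_eq_zero, Finset.filter_eq_empty_iff]
      intro j hj hc
      exact himg (Finset.mem_image.mpr ⟨j, hj, hc⟩)
  · rw [Finset.disjoint_left]
    rintro u hu hu'
    rw [Finset.mem_image] at hu hu'
    obtain ⟨j, _, rfl⟩ := hu
    obtain ⟨v, hvmem, hv⟩ := hu'
    rw [Finset.mem_filter] at hvmem
    have hv1 : 1 ≤ v.2 := (mem_dgF.mp hvmem.1).2.2.1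
    have hv2 : v.2 + 1 = 1 := congrArg Prod.snd hv
    omega

end Transfer

end CO

namespace CO

section AscSplit

variable {n s s' : ℕ} {mu lam a : ℕ → ℕ} {B : Finset ℕ} {σ g : ℕ × ℕ → ℕ}

lemma asc_split (hanti : Antidominant n mu)
    (hs' : s' = ((Finset.Icc 1 n).filter fun i => 2 ≤ mu i).card)
    (hlam : lam = fun i => mu i - 1)
    (hrow1 : ∀ j, (j, 1) ∈ dgF n mu → σ (j, 1) = a j)
    (hrow2 : ∀ j, n - s' + 1 ≤ j → j ≤ n → σ (j, 2) = bval a n B j)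
    (hg : ∀ v ∈ dgF n lam, g v = σ (v.1, v.2 + 1)) :
    ascStat n mu σ
      = (∑ j ∈ (Finset.Icc (n - s' + 1) n).filter fun j => bval a n B j < a j, lam j)
        + ascStat n lam g := by
  classical
  unfold ascStat
  rw [← Finset.sum_filter_add_sum_filter_not
    ((dgF n mu).filter fun u => 2 ≤ u.2 ∧ σ u < σ (dbox u)) (fun u => u.2 = 2)]
  congr 1
  · have h1 : ((dgF n mu).filter fun u => 2 ≤ u.2 ∧ σ u < σ (dbox u)).filter
        (fun u => u.2 = 2)
        = ((Finset.Icc (n - s' + 1) n).filter fun j => bval a n B j < a j).image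
            fun j => (j, 2) := by
      ext u
      rcases u with ⟨u1, u2⟩
      simp only [Finset.mem_filter, Finset.mem_image, Finset.mem_Icc, Prod.mk.injEq]
      constructor
      · rintro ⟨⟨hu, h2, hlt⟩, h2'⟩
        subst h2'
        have hj := (mem_dg2 hanti hs').mp hu
        refine ⟨u1, ⟨⟨hj.1, hj.2⟩, ?_⟩, rfl, rfl⟩
        have hmem1 : (u1, 1) ∈ dgF n mu := by
          rw [mem_dgF] at hu ⊢
          simp only at hu ⊢
          omega
        have hd : dbox (u1, 2) = (u1, 1) := rfl
        rw [← hrow2 u1 hj.1 hj.2, ← hrow1 u1 hmem1, ← hd]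
        exact hlt
      · rintro ⟨j, ⟨⟨hj1, hj2⟩, hba⟩, hj3, hj4⟩
        subst hj3; subst hj4
        have hu : (j, 2) ∈ dgF n mu := (mem_dg2 hanti hs').mpr ⟨hj1, hj2⟩
        have hmem1 : (j, 1) ∈ dgF n mu := by
          rw [mem_dgF] at hu ⊢
          simp only at hu ⊢
          omega
        refine ⟨⟨hu, le_refl 2, ?_⟩, rfl⟩
        have hd : dbox (j, 2) = (j, 1) := rfl
        rw [hd, hrow2 j hj1 hj2, hrow1 j hmem1]
        exact hba
    rw [h1, Finset.sum_image (by intro x _ y _ h; simpa using h)]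
    apply Finset.sum_congr rfl
    intro j hj
    rw [Finset.mem_filter, Finset.mem_Icc] at hj
    have h2 : 2 ≤ mu j := (two_le_mu_iff hanti hs' (by omega) hj.1.2).mpr hj.1.1
    rw [hlam]
    simp only
    omega
  · have h2 : ((dgF n mu).filter fun u => 2 ≤ u.2 ∧ σ u < σ (dbox u)).filter
        (fun u => ¬ u.2 = 2)
        = ((dgF n lam).filter fun v => 2 ≤ v.2 ∧ g v < g (dbox v)).image
            fun v => (v.1, v.2 + 1) := by
      ext u
      rcases u with ⟨u1, u2⟩
      simp only [Finset.mem_filter, Finset.mem_image, Prod.mk.injEq]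
      constructor
      · rintro ⟨⟨hu, h2, hlt⟩, h2'⟩
        have hu3 : 3 ≤ u2 := by omega
        have hvmem : (u1, u2 - 1) ∈ dgF n lam := by
          rw [mem_dgF_lam hlam]
          simp only
          have : u2 - 1 + 1 = u2 := by omega
          rw [this]
          exact ⟨hu, by omega⟩
        have hdmem : (u1, u2 - 2) ∈ dgF n lam := by
          rw [mem_dgF_lam hlam, mem_dgF] at *
          simp only at *
          omega
        refine ⟨(u1, u2 - 1), ⟨hvmem, by omega, ?_⟩, rfl, by omega⟩
        have e1 : g (u1, u2 - 1) = σ (u1, u2) := by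
          rw [hg _ hvmem]
          simp only
          have : u2 - 1 + 1 = u2 := by omega
          rw [this]
        have e2 : g (dbox (u1, u2 - 1)) = σ (u1, u2 - 1) := by
          have hd : dbox (u1, u2 - 1) = (u1, u2 - 2) := by
            simp only [dbox]
            rw [Nat.sub_sub]
          rw [hd, hg _ hdmem]
          simp only
          have : u2 - 2 + 1 = u2 - 1 := by omega
          rw [this]
        rw [e1, e2]
        exact hlt
      · rintro ⟨v, ⟨hv, h2, hlt⟩, hv3, hv4⟩
        subst hv3; subst hv4
        have hu : (v.1, v.2 + 1) ∈ dgF n mu := ((mem_dgF_lam hlam).mp hv).1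
        have hdmem : (v.1, v.2 - 1) ∈ dgF n lam := by
          rw [mem_dgF_lam hlam, mem_dgF] at *
          simp only at *
          omega
        refine ⟨⟨hu, by omega, ?_⟩, by omega⟩
        have e1 : σ (v.1, v.2 + 1) = g v := by rw [hg _ hv]
        have e2 : σ (dbox (v.1, v.2 + 1)) = g (dbox v) := by
          have hd : dbox (v.1, v.2 + 1) = (v.1, v.2) := by simp [dbox]
          have hd' : dbox v = (v.1, v.2 - 1) := rfl
          rw [hd, hd', hg _ hdmem]
          simp only
          have : v.2 - 1 + 1 = v.2 := by omega
          rw [this]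
        rw [e1, e2]
        exact hlt
    rw [h2, Finset.sum_image (by
      intro x _ y _ h
      rw [Prod.ext_iff] at h
      simp only at h
      exact Prod.ext h.1 (by omega))]
    apply Finset.sum_congr rfl
    intro v hv
    rw [Finset.mem_filter] at hv
    have hmu : v.2 + 1 ≤ mu v.1 := (mem_dgF.mp ((mem_dgF_lam hlam).mp hv.1).1).2.2.2
    rw [hlam]
    simp only
    omega

end AscSplit

end CO

namespace CO

section BigLemmas

variable {n s s' : ℕ} {mu lam a k : ℕ → ℕ} {B : Finset ℕ} {σ g : ℕ × ℕ → ℕ}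

/-- Attacking transfers through the row shift. -/
lemma attack_shift_iff (u v : ℕ × ℕ) :
    Attack (u.1, u.2 + 1) (v.1, v.2 + 1) ↔ Attack u v := by
  unfold Attack
  simp only [ne_eq, Prod.ext_iff, Prod.mk.injEq]
  omega

/-- Forward direction: deleting the bottom row of a filling of `μ`. -/
lemma forward_mem (hanti : Antidominant n mu) (hsn : s ≤ n)
    (hzero : ∀ i, 1 ≤ i → i ≤ n - s → mu i = 0) (hpos : 1 ≤ mu (n - s + 1))
    (hlam : lam = fun i => mu i - 1)
    (hs' : s' = ((Finset.Icc 1 n).filter fun i => 2 ≤ mu i).card)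
    (hainj : ∀ j ∈ Finset.Icc (n - s + 1) n, ∀ j' ∈ Finset.Icc (n - s + 1) n,
      a j = a j' → j = j')
    (hσ : σ ∈ FillF n mu a
      (fun i => k i + if i ∈ (Finset.Icc (n - s + 1) n).image a then 1 else 0)) :
    shDown n lam σ ∈ FillF n lam (bval a n (rowT n s' σ)) k := by
  obtain ⟨⟨hrange, hrow1, hna, hgr, hcount⟩, h0⟩ := mem_FillF.mp hσ
  have hg : ∀ v ∈ dgF n lam, shDown n lam σ v = σ (v.1, v.2 + 1) := by
    intro v hv
    unfold shDown
    rw [if_pos hv]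
  rw [mem_FillF]
  constructor
  · refine ⟨?_, ?_, ?_, ?_, ?_⟩
    · intro u hu
      rw [hg u hu]
      exact hrange _ ((mem_dgF_lam hlam).mp hu).1
    · intro j hj
      have hj2 : (j, 2) ∈ dgF n mu := ((mem_dgF_lam hlam).mp hj).1
      have hjr := (mem_dg2 hanti hs').mp hj2
      rw [hg _ hj]
      exact (bval_forward hanti hs' hna hgr hrow1 hjr.1 hjr.2).symm
    · intro u hu v hv hatt
      rw [hg u hu, hg v hv]
      exact hna _ ((mem_dgF_lam hlam).mp hu).1 _ ((mem_dgF_lam hlam).mp hv).1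
        ((attack_shift_iff u v).mpr hatt)
    · rw [greedyRule_iff]
      intro u hu h2
      exact (greedy_shift_iff hanti hlam hg hu h2).mp
        (greedyRule_iff.mp hgr (u.1, u.2 + 1) ((mem_dgF_lam hlam).mp hu).1 (by omega))
    · intro i hi1 hi2
      have hcs := count_split hanti hsn hzero hpos hlam hainj hrow1 hg i
      have hci := hcount i hi1 hi2
      dsimp only at hci
      omega
  · intro u hu
    unfold shDown
    rw [if_neg hu]

/-- Backward direction: adding the bottom row `a` to a filling of `λ`. -/
lemma backward_mem (hanti : Antidominant n mu) (hsn : s ≤ n)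
    (hzero : ∀ i, 1 ≤ i → i ≤ n - s → mu i = 0) (hpos : 1 ≤ mu (n - s + 1))
    (hlam : lam = fun i => mu i - 1)
    (hs' : s' = ((Finset.Icc 1 n).filter fun i => 2 ≤ mu i).card)
    (ha : ∀ j ∈ Finset.Icc (n - s + 1) n, a j ∈ Finset.Icc 1 n)
    (hainj : ∀ j ∈ Finset.Icc (n - s + 1) n, ∀ j' ∈ Finset.Icc (n - s + 1) n,
      a j = a j' → j = j')
    (hB : B ∈ Finset.powersetCard s' (Finset.Icc 1 n))
    (hgF : g ∈ FillF n lam (bval a n B) k) :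
    shUp n mu a g ∈ FillF n mu a
        (fun i => k i + if i ∈ (Finset.Icc (n - s + 1) n).image a then 1 else 0)
      ∧ rowT n s' (shUp n mu a g) = B := by
  have hs'n : s' ≤ n := card_filter_two_le hanti hs'
  rw [Finset.mem_powersetCard] at hB
  have hBc : B.card = s' := hB.2
  obtain ⟨⟨hrange, hrow1, hna, hgr, hcount⟩, h0⟩ := mem_FillF.mp hgF
  set f := shUp n mu a g with hf
  have ff1 : ∀ u1, (u1, 1) ∈ dgF n mu → f (u1, 1) = a u1 := by
    intro u1 hu
    show (if (u1, 1) ∈ dgF n mu then _ else _) = _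
    rw [if_pos hu, if_pos rfl]
  have ff2 : ∀ u1 u2, (u1, u2) ∈ dgF n mu → 2 ≤ u2 → f (u1, u2) = g (u1, u2 - 1) := by
    intro u1 u2 hu h2
    show (if (u1, u2) ∈ dgF n mu then _ else _) = _
    rw [if_pos hu, if_neg (by omega)]
  have hgf : ∀ v ∈ dgF n lam, g v = f (v.1, v.2 + 1) := by
    intro v hv
    have hvm := (mem_dgF_lam hlam).mp hv
    rw [ff2 v.1 (v.2 + 1) hvm.1 (by omega)]
    simp only [Nat.add_sub_cancel]
  have fr2 : ∀ j, n - s' + 1 ≤ j → j ≤ n → f (j, 2) = bval a n B j := by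
    intro j hj1 hj2
    have hj2m : (j, 2) ∈ dgF n mu := (mem_dg2 hanti hs').mpr ⟨hj1, hj2⟩
    have hj1m : (j, 1) ∈ dgF n lam := by
      rw [mem_dgF_lam hlam]
      exact ⟨hj2m, le_refl 1⟩
    rw [ff2 j 2 hj2m (le_refl 2)]
    exact hrow1 j hj1m
  have hrowT : rowT n s' f = B := by
    unfold rowT
    rw [B_eq_image_bval (a := a) hBc hs'n]
    apply Finset.image_congr
    intro j hj
    rw [Finset.mem_coe, Finset.mem_Icc] at hj
    exact fr2 j hj.1 hj.2
  refine ⟨?_, hrowT⟩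
  rw [mem_FillF]
  constructor
  · refine ⟨?_, ?_, ?_, ?_, ?_⟩
    · -- range
      rintro ⟨u1, u2⟩ hu
      have hu' := mem_dgF.mp hu
      simp only at hu'
      rcases Nat.lt_or_ge u2 2 with h | h
      · have hu2 : u2 = 1 := by omega
        subst hu2
        rw [ff1 u1 hu]
        have := ha u1 (Finset.mem_Icc.mpr
          ⟨(one_le_mu_iff hanti hsn hzero hpos hu'.1 hu'.2.1).mp (by omega), hu'.2.1⟩)
        rw [Finset.mem_Icc] at this
        exact this
      · rw [ff2 u1 u2 hu h]
        apply hrange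
        rw [mem_dgF_lam hlam]
        simp only
        have h21 : u2 - 1 + 1 = u2 := by omega
        rw [h21]
        exact ⟨hu, by omega⟩
    · -- bottom row
      intro j hj
      exact ff1 j hj
    · -- non-attacking
      rintro ⟨u1, u2⟩ hu ⟨v1, v2⟩ hv hatt
      have hu' := mem_dgF.mp hu
      have hv' := mem_dgF.mp hv
      simp only at hu' hv'
      obtain ⟨hne, hor⟩ := hatt
      simp only at hor
      have hvlam : 2 ≤ v2 → (v1, v2 - 1) ∈ dgF n lam := by
        intro h2
        rw [mem_dgF_lam hlam]
        simp only
        have h21 : v2 - 1 + 1 = v2 := by omega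
        rw [h21]
        exact ⟨hv, by omega⟩
      have hulam : 2 ≤ u2 → (u1, u2 - 1) ∈ dgF n lam := by
        intro h2
        rw [mem_dgF_lam hlam]
        simp only
        have h21 : u2 - 1 + 1 = u2 := by omega
        rw [h21]
        exact ⟨hu, by omega⟩
      rcases Nat.lt_or_ge u2 2 with hu2 | hu2 <;> rcases Nat.lt_or_ge v2 2 with hv2 | hv2
      · -- both in row 1
        have hu1 : u2 = 1 := by omega
        have hv1 : v2 = 1 := by omega
        subst hu1; subst hv1
        rw [ff1 u1 hu, ff1 v1 hv]
        intro hc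
        have hu1r := (mem_dg1 hanti hsn hzero hpos).mp hu
        have hv1r := (mem_dg1 hanti hsn hzero hpos).mp hv
        have := hainj u1 (Finset.mem_Icc.mpr hu1r) v1 (Finset.mem_Icc.mpr hv1r) hc
        apply hne
        rw [Prod.ext_iff]
        exact ⟨this, rfl⟩
      · -- u in row 1, v in row ≥ 2 : attack forces v2 = 2, v1 < u1
        have hu1 : u2 = 1 := by omega
        subst hu1
        have hcase : v2 = 2 ∧ v1 < u1 := by
          rcases hor with h | h | h
          · omega
          · omega
          · exact ⟨by omega, h.2⟩
        obtain ⟨hv22, hlt⟩ := hcase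
        subst hv22
        rw [ff1 u1 hu, ff2 v1 2 hv (le_refl 2)]
        have hvr := (mem_dg2 hanti hs').mp hv
        rw [hrow1 v1 (hvlam (le_refl 2))]
        exact fun hc => bval_ne_a hBc hs'n hvr.1 hlt hu'.2.1 hc.symm
      · -- v in row 1, u in row ≥ 2
        have hv1 : v2 = 1 := by omega
        subst hv1
        have hcase : u2 = 2 ∧ u1 < v1 := by
          rcases hor with h | h | h
          · omega
          · exact ⟨by omega, h.2⟩
          · omega
        obtain ⟨hu22, hlt⟩ := hcase
        subst hu22
        rw [ff1 v1 hv, ff2 u1 2 hu (le_refl 2)]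
        have hur := (mem_dg2 hanti hs').mp hu
        rw [hrow1 u1 (hulam (le_refl 2))]
        exact bval_ne_a hBc hs'n hur.1 hlt hv'.2.1
      · -- both in rows ≥ 2
        rw [ff2 u1 u2 hu hu2, ff2 v1 v2 hv hv2]
        apply hna _ (hulam hu2) _ (hvlam hv2)
        refine ⟨?_, ?_⟩
        · intro hc
          rw [Prod.ext_iff] at hc
          simp only at hc
          apply hne
          rw [Prod.ext_iff]
          exact ⟨hc.1, by omega⟩
        · simp only
          omega
    · -- greedy
      rw [greedyRule_iff]
      rintro ⟨u1, u2⟩ hu h2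
      simp only at h2
      rcases Nat.lt_or_ge u2 3 with h3 | h3
      · -- row 2
        have hu22 : u2 = 2 := by omega
        subst hu22
        have hur := (mem_dg2 hanti hs').mp hu
        have hrow1f : f (u1, 1) = a u1 := by
          apply ff1
          rw [mem_dgF] at hu ⊢
          simp only at hu ⊢
          omega
        rw [greedy_row2_iff hanti hs' hur.1 hur.2 hrow1f]
        have himg : (Finset.Icc (n - s' + 1) u1).image (fun i => f (i, 2))
            = (Finset.Icc (n - s' + 1) u1).image (bval a n B) := by
          apply Finset.image_congr
          intro j hj
          rw [Finset.mem_coe, Finset.mem_Icc] at hj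
          exact fr2 j hj.1 (by omega)
        rw [himg, fr2 u1 hur.1 hur.2]
        exact bval_eq_chooseStep_image hBc hs'n hur.1 hur.2
      · -- rows ≥ 3
        have hvlam : (u1, u2 - 1) ∈ dgF n lam := by
          rw [mem_dgF_lam hlam]
          simp only
          have h21 : u2 - 1 + 1 = u2 := by omega
          rw [h21]
          exact ⟨hu, by omega⟩
        have hgf' : ∀ v ∈ dgF n lam, g v = f (v.1, v.2 + 1) := hgf
        have hiff := greedy_shift_iff (σ := f) hanti hlam hgf' hvlam (by simp; omega)
        have h21 : u2 - 1 + 1 = u2 := by omega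
        simp only [h21] at hiff
        exact hiff.mpr (greedyRule_iff.mp hgr (u1, u2 - 1) hvlam (by simp; omega))
    · -- counts
      intro i hi1 hi2
      have hcs := count_split hanti hsn hzero hpos hlam hainj
        (σ := f) (g := g) (fun j hj => ff1 j hj) hgf i
      have hci := hcount i hi1 hi2
      dsimp only
      omega
  · intro u hu
    show (if u ∈ dgF n mu then _ else _) = 0
    rw [if_neg hu]

end BigLemmas

end CO

open CO in
/-- Proposition `mostgeneralrecurrence`. Row-removal recurrence
for the coefficients `c_a^μ(k)`: with `λ_i = μ_i - 1`, `s'` the number of nonzero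
parts of `λ`, and `a(B)` the greedy reordering of a subset `B` of size `s'`,
`c_a^μ(k + δ) = Σ_B q^{Σ_{j : b_j < a_j} λ_j} c_{a(B)}^λ(k)`. -/
theorem c_recurrence (n : ℕ) (hn : 1 ≤ n) (mu : ℕ → ℕ) (hanti : Antidominant n mu)
    (s : ℕ) (hs1 : 1 ≤ s) (hsn : s ≤ n)
    (hzero : ∀ i, 1 ≤ i → i ≤ n - s → mu i = 0) (hpos : 1 ≤ mu (n - s + 1))
    (lam : ℕ → ℕ) (hlam : lam = fun i => mu i - 1)
    (s' : ℕ) (hs' : s' = ((Finset.Icc 1 n).filter fun i => 2 ≤ mu i).card)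
    (a : ℕ → ℕ) (ha : ∀ j ∈ Finset.Icc (n - s + 1) n, a j ∈ Finset.Icc 1 n)
    (hainj : ∀ j ∈ Finset.Icc (n - s + 1) n, ∀ j' ∈ Finset.Icc (n - s + 1) n,
      a j = a j' → j = j')
    (k : ℕ → ℕ) :
    cCoef n mu a
        (fun i => k i + if i ∈ (Finset.Icc (n - s + 1) n).image a then 1 else 0)
      = ∑ B ∈ Finset.powersetCard s' (Finset.Icc 1 n),
          Polynomial.X ^ (∑ j ∈ (Finset.Icc (n - s' + 1) n).filter
              fun j => bval a n B j < a j, lam j) *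
            cCoef n lam (bval a n B) k := by
  classical
  have hs'n : s' ≤ n := card_filter_two_le hanti hs'
  rw [cCoef_eq_sum_FillF]
  have hrhs : ∀ B ∈ Finset.powersetCard s' (Finset.Icc 1 n),
      Polynomial.X ^ (∑ j ∈ (Finset.Icc (n - s' + 1) n).filter
          fun j => bval a n B j < a j, lam j) * cCoef n lam (bval a n B) k
        = ∑ g ∈ FillF n lam (bval a n B) k,
            Polynomial.X ^ ((∑ j ∈ (Finset.Icc (n - s' + 1) n).filter
              fun j => bval a n B j < a j, lam j) + ascStat n lam g) := by
    intro B _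
    rw [cCoef_eq_sum_FillF, Finset.mul_sum]
    exact Finset.sum_congr rfl fun g _ => (pow_add _ _ _).symm
  rw [Finset.sum_congr rfl hrhs]
  have hmaps : ∀ σ ∈ FillF n mu a
      (fun i => k i + if i ∈ (Finset.Icc (n - s + 1) n).image a then 1 else 0),
      rowT n s' σ ∈ Finset.powersetCard s' (Finset.Icc 1 n) := by
    intro σ hσ
    obtain ⟨⟨hrange, _, hna, _, _⟩, _⟩ := mem_FillF.mp hσ
    exact rowT_mem_powersetCard hanti hs' hrange hna
  rw [← Finset.sum_fiberwise_of_maps_to hmaps]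
  apply Finset.sum_congr rfl
  intro B hB
  apply Finset.sum_nbij' (shDown n lam) (shUp n mu a)
  · -- forward maps to
    intro σ hσ
    rw [Finset.mem_filter] at hσ
    obtain ⟨hσF, hrowB⟩ := hσ
    have := forward_mem hanti hsn hzero hpos hlam hs' hainj hσF
    rwa [hrowB] at this
  · -- backward maps to
    intro g hg
    rw [Finset.mem_filter]
    exact ⟨(backward_mem hanti hsn hzero hpos hlam hs' ha hainj hB hg).1,
      (backward_mem hanti hsn hzero hpos hlam hs' ha hainj hB hg).2⟩
  · -- left inverse
    intro σ hσ
    rw [Finset.mem_filter] at hσ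
    obtain ⟨hσF, _⟩ := hσ
    obtain ⟨⟨hrange, hrow1, _, _, _⟩, h0⟩ := mem_FillF.mp hσF
    funext u
    rcases u with ⟨u1, u2⟩
    show (if (u1, u2) ∈ dgF n mu then
        (if u2 = 1 then a u1 else shDown n lam σ (u1, u2 - 1)) else 0) = σ (u1, u2)
    by_cases hu : (u1, u2) ∈ dgF n mu
    · rw [if_pos hu]
      by_cases h1 : u2 = 1
      · subst h1
        rw [if_pos rfl]
        exact (hrow1 u1 hu).symm
      · rw [if_neg h1]
        have hu' := mem_dgF.mp hu
        simp only at hu'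
        have hvm : (u1, u2 - 1) ∈ dgF n lam := by
          rw [mem_dgF_lam hlam]
          simp only
          have h21 : u2 - 1 + 1 = u2 := by omega
          rw [h21]
          exact ⟨hu, by omega⟩
        show (if (u1, u2 - 1) ∈ dgF n lam then σ (u1, u2 - 1 + 1) else 0) = _
        rw [if_pos hvm]
        have h21 : u2 - 1 + 1 = u2 := by omega
        rw [h21]
    · rw [if_neg hu]
      exact (h0 _ hu).symm
  · -- right inverse
    intro g hg
    obtain ⟨_, h0⟩ := mem_FillF.mp hg
    funext u
    rcases u with ⟨u1, u2⟩
    show (if (u1, u2) ∈ dgF n lam then shUp n mu a g (u1, u2 + 1) else 0) = g (u1, u2)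
    by_cases hu : (u1, u2) ∈ dgF n lam
    · rw [if_pos hu]
      have hum : (u1, u2 + 1) ∈ dgF n mu := ((mem_dgF_lam hlam).mp hu).1
      have h1 : 1 ≤ u2 := ((mem_dgF_lam hlam).mp hu).2
      show (if (u1, u2 + 1) ∈ dgF n mu then
          (if u2 + 1 = 1 then a u1 else g (u1, u2 + 1 - 1)) else 0) = _
      rw [if_pos hum, if_neg (by omega)]
      simp only [Nat.add_sub_cancel]
    · rw [if_neg hu]
      exact (h0 _ hu).symm
  · -- values
    intro σ hσ
    rw [Finset.mem_filter] at hσ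
    obtain ⟨hσF, hrowB⟩ := hσ
    obtain ⟨⟨hrange, hrow1, hna, hgr, _⟩, h0⟩ := mem_FillF.mp hσF
    congr 1
    apply asc_split hanti hs' hlam hrow1
    · intro j hj1 hj2
      rw [← hrowB]
      exact (bval_forward hanti hs' hna hgr hrow1 hj1 hj2).symm
    · intro v hv
      unfold shDown
      rw [if_pos hv]
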